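/- The equality binom(p,i) = (∏_{1≤j<i} m_j/(m_i − m_j)) · (∏_{i<j≤p} m_j/(m_j − m_i)) holds in ℚ for every i with 1 ≤ i ≤ p if and only if d_1 = d_2 = ⋯ = d_p (i.e. the resolution is pure). -/

import Mathlib

open Finset Nat

lemma tele (p : ℕ) (hp : 1 ≤ p) :
    ∏ j ∈ Finset.Ioc 1 p, ((j : ℚ) / ((j : ℚ) - 1)) = p := by
  induction p, hp using Nat.le_induction with
  | base => simp
  | succ n hn ih =>
    rw [Finset.prod_Ioc_succ_top (by omega), ih]
    have hn0 : (n : ℚ) ≠ 0 := by positivity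
    push_cast
    field_simp
    rw [add_sub_cancel_right, div_self hn0]

lemma prodIoc_fact (i p : ℕ) (h : i ≤ p) :
    (∏ j ∈ Finset.Ioc i p, j) * i ! = p ! := by
  induction p, h using Nat.le_induction with
  | base => simp
  | succ n hn ih =>
    rw [Finset.prod_Ioc_succ_top (by omega), Nat.factorial_succ]
    rw [mul_comm (∏ j ∈ Finset.Ioc i n, j) (n+1), mul_assoc, ih]

lemma prodIoc_sub (i p : ℕ) (h : i ≤ p) :
    (∏ j ∈ Finset.Ioc i p, (j - i)) = (p - i)! := by
  induction p, h using Nat.le_induction with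
  | base => simp
  | succ n hn ih =>
    rw [Finset.prod_Ioc_succ_top (by omega), ih]
    have h2 : n + 1 - i = (n - i) + 1 := by omega
    rw [h2, Nat.factorial_succ, mul_comm]

lemma prodIco_rev (i : ℕ) :
    (∏ j ∈ Finset.Ico 1 i, (i - j)) = ∏ j ∈ Finset.Ico 1 i, j := by
  refine Finset.prod_nbij' (fun j => i - j) (fun j => i - j) ?_ ?_ ?_ ?_ ?_
  · intro a ha; simp only [Finset.mem_Ico] at *; omega
  · intro a ha; simp only [Finset.mem_Ico] at *; omega
  · intro a ha; simp only [Finset.mem_Ico] at ha; show i - (i - a) = a; omega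
  · intro a ha; simp only [Finset.mem_Ico] at ha; show i - (i - a) = a; omega
  · intro a ha; rfl

/-- Complete intersection: equality `binom(p,i) = (∏_{1≤j<i} m_j/(m_i − m_j)) ·
(∏_{i<j≤p} m_j/(m_j − m_i))` holds in `ℚ` for all `1 ≤ i ≤ p` if and only if
`d_1 = … = d_p`, i.e. the resolution is pure. -/
theorem ci_lower_bound_equality_iff_pure (p : ℕ) (hp : 1 ≤ p) (d : ℕ → ℕ)
    (hd_pos : ∀ j, 1 ≤ j → j ≤ p → 1 ≤ d j)
    (hd_dec : ∀ j k, 1 ≤ j → j ≤ k → k ≤ p → d k ≤ d j)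
    (m : ℕ → ℚ) (hm : ∀ i, m i = ∑ j ∈ Finset.Icc (p - i + 1) p, (d j : ℚ)) :
    (∀ i, 1 ≤ i → i ≤ p →
      (p.choose i : ℚ) =
        (∏ j ∈ Finset.Ico 1 i, m j / (m i - m j)) *
        (∏ j ∈ Finset.Ioc i p, m j / (m j - m i)))
    ↔ (∀ j k, 1 ≤ j → j ≤ p → 1 ≤ k → k ≤ p → d j = d k) := by
  have ha1 : (1 : ℚ) ≤ (d p : ℚ) := by exact_mod_cast hd_pos p hp le_rfl
  have ha0 : (0 : ℚ) < (d p : ℚ) := by linarith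
  constructor
  · intro H
    -- key claim: every d t = d p
    have claim : ∀ t, 1 ≤ t → t ≤ p → d t = d p := by
      rcases Nat.lt_or_ge p 2 with h2 | h2
      · intro t h1 ht
        have : t = p := by omega
        exact congrArg d this
      · set a : ℚ := (d p : ℚ) with ha
        have ha0' : (0:ℚ) < a := by rw [ha]; exact ha0
        have hm1 : m 1 = a := by
          rw [hm]
          have hpe : p - 1 + 1 = p := by omega
          rw [hpe]; simp [ha]
        have hmlb : ∀ j, 1 ≤ j → j ≤ p → (j : ℚ) * a ≤ m j := by
          intro j h1 hjp
          rw [hm]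
          have hcard : p + 1 - (p - j + 1) = j := by omega
          calc (j : ℚ) * a = ∑ _t ∈ Finset.Icc (p - j + 1) p, a := by
                rw [Finset.sum_const, Nat.card_Icc, hcard, nsmul_eq_mul]
            _ ≤ ∑ t ∈ Finset.Icc (p - j + 1) p, (d t : ℚ) := by
                refine Finset.sum_le_sum fun t ht => ?_
                simp only [Finset.mem_Icc] at ht
                rw [ha]; exact_mod_cast hd_dec t p (by omega) ht.2 le_rfl
        have hP := H 1 le_rfl hp
        rw [Nat.choose_one_right, hm1] at hP
        simp only [Finset.Ico_self, Finset.prod_empty, one_mul] at hP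
        -- positivity and bound for each factor
        have hpos : ∀ j ∈ Finset.Ioc 1 p, 0 < m j / (m j - a) := by
          intro j hj
          simp only [Finset.mem_Ioc] at hj
          have hlb := hmlb j (by omega) hj.2
          have h2j : (2 : ℚ) ≤ (j : ℚ) := by exact_mod_cast hj.1
          have hja : a < m j := by nlinarith
          exact div_pos (by linarith) (by linarith)
        have hle : ∀ j ∈ Finset.Ioc 1 p, m j / (m j - a) ≤ (j : ℚ) / ((j : ℚ) - 1) := by
          intro j hj
          simp only [Finset.mem_Ioc] at hj
          have hlb := hmlb j (by omega) hj.2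
          have h2j : (2 : ℚ) ≤ (j : ℚ) := by exact_mod_cast hj.1
          have hma : 0 < m j - a := by nlinarith
          rw [div_le_div_iff₀ hma (by linarith)]
          nlinarith
        have key : m p = (p : ℚ) * a := by
          by_contra hne
          have hplb := hmlb p hp le_rfl
          have hplt : (p : ℚ) * a < m p := lt_of_le_of_ne hplb (fun h => hne h.symm)
          have h2p : (2 : ℚ) ≤ (p : ℚ) := by exact_mod_cast h2
          have hma : 0 < m p - a := by nlinarith
          have hstrict : m p / (m p - a) < (p : ℚ) / ((p : ℚ) - 1) := by
            rw [div_lt_div_iff₀ hma (by linarith)]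
            nlinarith
          have hlt : (∏ j ∈ Finset.Ioc 1 p, m j / (m j - a)) <
              ∏ j ∈ Finset.Ioc 1 p, ((j : ℚ) / ((j : ℚ) - 1)) := by
            refine Finset.prod_lt_prod hpos hle ⟨p, ?_, hstrict⟩
            simp only [Finset.mem_Ioc]; omega
          rw [← hP, tele p hp] at hlt
          exact lt_irrefl _ hlt
        -- m p = sum over Icc 1 p
        have hmp : ∑ t ∈ Finset.Icc 1 p, (d t : ℚ) = (p : ℚ) * a := by
          rw [← key, hm]
          have : p - p + 1 = 1 := by omega
          rw [this]
        have hzero : ∑ t ∈ Finset.Icc 1 p, ((d t : ℚ) - a) = 0 := by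
          rw [Finset.sum_sub_distrib, hmp, Finset.sum_const, Nat.card_Icc]
          have : p + 1 - 1 = p := by omega
          rw [this, nsmul_eq_mul, sub_self]
        intro t h1 htp
        have := (Finset.sum_eq_zero_iff_of_nonneg ?_).mp hzero t (by simp [Finset.mem_Icc]; omega)
        · have h3 : (d t : ℚ) = a := by linarith [sub_eq_zero.mp this]
          rw [ha] at h3
          exact_mod_cast h3
        · intro x hx
          simp only [Finset.mem_Icc] at hx
          have := hd_dec x p hx.1 hx.2 le_rfl
          have : (a : ℚ) ≤ (d x : ℚ) := by rw [ha]; exact_mod_cast this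
          linarith
    intro j k hj1 hj2 hk1 hk2
    rw [claim j hj1 hj2, claim k hk1 hk2]
  · intro hpure
    set c : ℚ := (d p : ℚ) with hc
    have hc0 : c ≠ 0 := ha0.ne'
    have hmval : ∀ i, 1 ≤ i → i ≤ p → m i = (i : ℚ) * c := by
      intro i h1 h2
      rw [hm]
      have hconst : ∀ j ∈ Finset.Icc (p - i + 1) p, (d j : ℚ) = c := by
        intro j hj
        simp only [Finset.mem_Icc] at hj
        rw [hc]
        exact_mod_cast congrArg (Nat.cast : ℕ → ℚ)
          (hpure j p (by omega) hj.2 hp le_rfl)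
      rw [Finset.sum_congr rfl hconst, Finset.sum_const, Nat.card_Icc]
      have : p + 1 - (p - i + 1) = i := by omega
      rw [this, nsmul_eq_mul]
    intro i h1 h2
    have P1 : (∏ j ∈ Finset.Ico 1 i, m j / (m i - m j)) =
        ((∏ j ∈ Finset.Ico 1 i, j : ℕ) : ℚ) / ((∏ j ∈ Finset.Ico 1 i, (i - j) : ℕ) : ℚ) := by
      rw [Nat.cast_prod, Nat.cast_prod, ← Finset.prod_div_distrib]
      refine Finset.prod_congr rfl fun j hj => ?_
      simp only [Finset.mem_Ico] at hj
      rw [hmval j hj.1 (by omega), hmval i h1 h2]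
      have hsub : (i : ℚ) * c - (j : ℚ) * c = ((i - j : ℕ) : ℚ) * c := by
        rw [Nat.cast_sub hj.2.le]; ring
      rw [hsub, mul_div_mul_right _ _ hc0]
    have P2 : (∏ j ∈ Finset.Ioc i p, m j / (m j - m i)) =
        ((∏ j ∈ Finset.Ioc i p, j : ℕ) : ℚ) / ((∏ j ∈ Finset.Ioc i p, (j - i) : ℕ) : ℚ) := by
      rw [Nat.cast_prod, Nat.cast_prod, ← Finset.prod_div_distrib]
      refine Finset.prod_congr rfl fun j hj => ?_
      simp only [Finset.mem_Ioc] at hj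
      rw [hmval j (by omega) hj.2, hmval i h1 h2]
      have hsub : (j : ℚ) * c - (i : ℚ) * c = ((j - i : ℕ) : ℚ) * c := by
        rw [Nat.cast_sub (le_of_lt hj.1)]; ring
      rw [hsub, mul_div_mul_right _ _ hc0]
    rw [P1, P2, prodIco_rev]
    have hA : (∏ j ∈ Finset.Ico 1 i, j) ≠ 0 := by
      refine Finset.prod_ne_zero_iff.mpr fun j hj => ?_
      simp only [Finset.mem_Ico] at hj; omega
    have hfirst : ((∏ j ∈ Finset.Ico 1 i, j : ℕ) : ℚ) /
        ((∏ j ∈ Finset.Ico 1 i, j : ℕ) : ℚ) = 1 := by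
      rw [div_self]; exact_mod_cast hA
    rw [hfirst, one_mul]
    -- now show choose = prod / prod
    have hB := prodIoc_sub i p h2
    have hAf := prodIoc_fact i p h2
    have hnat : p.choose i * (∏ j ∈ Finset.Ioc i p, (j - i)) = ∏ j ∈ Finset.Ioc i p, j := by
      have hch := Nat.choose_mul_factorial_mul_factorial h2
      have : p.choose i * (∏ j ∈ Finset.Ioc i p, (j - i)) * i ! =
          (∏ j ∈ Finset.Ioc i p, j) * i ! := by
        rw [hB, hAf, ← hch]; ring
      exact Nat.eq_of_mul_eq_mul_right (Nat.factorial_pos i) this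
    have hBne : ((∏ j ∈ Finset.Ioc i p, (j - i) : ℕ) : ℚ) ≠ 0 := by
      rw [hB]
      exact_mod_cast (Nat.factorial_pos (p - i)).ne'
    rw [eq_div_iff hBne]
    exact_mod_cast hnat
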